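/- The series ∑_{n=0}^∞ (1/(30n+1) + 1/(30n+7) - 1/(30n+11) + 1/(30n+13) - 1/(30n+17) + 1/(30n+19) - 1/(30n+23) - 1/(30n+29)) converges to √3·π/5. -/

import Mathlib

/-!
Writing `S = ∑ (1/(6m+1) - 1/(6m+5))` and grouping its terms in blocks of five `m`, each
block of the series equals five consecutive terms of `S` plus a fifth of one term of `S`, so
the series sums to `(1 + 1/5) S`. Termwise integration of `∑ (x^(6m) - x^(6m+4))` gives
`S = ∫₀¹ (1 + x²)/(1 + x² + x⁴) dx`, and
`(arctan ((2x+1)/√3) + arctan ((2x-1)/√3))/√3` is an antiderivative, so `S = π/(2√3)`.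
-/

open Filter Real intervalIntegral Topology

lemma sum_range_mul_eq_sum_sum_range {M : Type*} [AddCommMonoid M] (f : ℕ → M) (k N : ℕ) :
    ∑ m ∈ Finset.range (k * N), f m =
      ∑ n ∈ Finset.range N, ∑ j ∈ Finset.range k, f (k * n + j) := by
  induction N with
  | zero => simp
  | succ N ih => rw [mul_add_one, Finset.sum_range_add, ih, Finset.sum_range_succ]

lemma tendsto_integral_mul_pow_atTop {f : ℝ → ℝ} (hf : ContinuousOn f (Set.Icc 0 1)) :
    Tendsto (fun n : ℕ => ∫ x in (0 : ℝ)..1, f x * x ^ n) atTop (𝓝 0) := by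
  obtain ⟨C, hC⟩ := isCompact_Icc.exists_bound_of_continuousOn hf
  have hbound (n : ℕ) : ‖∫ x in (0 : ℝ)..1, f x * x ^ n‖ ≤ C * (1 / ((n : ℝ) + 1)) := by
    calc ‖∫ x in (0 : ℝ)..1, f x * x ^ n‖ ≤ ∫ x in (0 : ℝ)..1, C * x ^ n := by
          refine norm_integral_le_of_norm_le zero_le_one (.of_forall fun x hx => ?_)
            ((continuous_pow n).intervalIntegrable 0 1 |>.const_mul C)
          have hx' : x ∈ Set.Icc (0 : ℝ) 1 := Set.Ioc_subset_Icc_self hx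
          rw [norm_mul, norm_pow, Real.norm_of_nonneg hx'.1]
          exact mul_le_mul_of_nonneg_right (hC x hx') (pow_nonneg hx'.1 n)
      _ = C * (1 / ((n : ℝ) + 1)) := by simp [integral_pow]
  have hC0 : Tendsto (fun n : ℕ => C * (1 / ((n : ℝ) + 1))) atTop (𝓝 0) := by
    simpa using tendsto_one_div_add_atTop_nhds_zero_nat.const_mul C
  exact squeeze_zero_norm hbound hC0

lemma hasDerivAt_arctan_add_arctan_div_sqrt_three (x : ℝ) :
    HasDerivAt (fun x => (arctan ((2 * x + 1) / √3) + arctan ((2 * x - 1) / √3)) / √3)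
      ((1 + x ^ 2) / (1 + x ^ 2 + x ^ 4)) x := by
  have hlin (c : ℝ) : HasDerivAt (fun x : ℝ => (2 * x + c) / √3) (2 / √3) x := by
    simpa using (((hasDerivAt_id x).const_mul 2).add_const c).div_const √3
  have hsum := ((hasDerivAt_arctan _).comp x (hlin 1)).add
    ((hasDerivAt_arctan _).comp x (hlin (-1)))
  refine (hsum.div_const √3).congr_deriv ?_
  have h3 : √3 ^ 2 = 3 := sq_sqrt (by norm_num)
  field_simp
  rw [h3]
  ring

lemma continuous_one_add_sq_div_one_add_sq_add_pow_four :
    Continuous fun x : ℝ => (1 + x ^ 2) / (1 + x ^ 2 + x ^ 4) :=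
  by fun_prop (disch := intro x; positivity)

lemma integral_one_add_sq_div_one_add_sq_add_pow_four :
    ∫ x in (0 : ℝ)..1, (1 + x ^ 2) / (1 + x ^ 2 + x ^ 4) = √3 * π / 6 := by
  rw [integral_eq_sub_of_hasDerivAt (fun x _ => hasDerivAt_arctan_add_arctan_div_sqrt_three x)
    (continuous_one_add_sq_div_one_add_sq_add_pow_four.intervalIntegrable 0 1)]
  norm_num [neg_div]
  field_simp
  norm_num

lemma sum_range_inv_sub_inv_eq_integral (N : ℕ) :
    ∑ n ∈ Finset.range N, ((1 : ℝ) / (6 * n + 1) - 1 / (6 * n + 5)) =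
      ∫ x in (0 : ℝ)..1, (1 + x ^ 2) / (1 + x ^ 2 + x ^ 4) * (1 - x ^ (6 * N)) := by
  have hgeom (x : ℝ) : (1 + x ^ 2) / (1 + x ^ 2 + x ^ 4) * (1 - x ^ (6 * N)) =
      ∑ n ∈ Finset.range N, (x ^ (6 * n) - x ^ (6 * n + 4)) := by
    have hden : 1 + x ^ 2 + x ^ 4 ≠ 0 := by positivity
    have hfactor : ∑ n ∈ Finset.range N, (x ^ (6 * n) - x ^ (6 * n + 4)) =
        (1 - x ^ 4) * ∑ n ∈ Finset.range N, (x ^ 6) ^ n := by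
      rw [Finset.mul_sum]
      exact Finset.sum_congr rfl fun n _ => by ring
    rw [hfactor, div_mul_eq_mul_div, div_eq_iff hden, pow_mul]
    linear_combination (1 + x ^ 2) * geom_sum_mul (x ^ 6) N
  have hpow (m : ℕ) := (continuous_pow m).intervalIntegrable (μ := MeasureTheory.volume) 0 1
  simp_rw [hgeom]
  rw [integral_finsetSum fun n _ => (hpow _).sub (hpow _)]
  refine Finset.sum_congr rfl fun n _ => ?_
  rw [integral_sub (hpow _) (hpow _), integral_pow, integral_pow]
  push_cast
  ring

lemma tendsto_sum_range_inv_six_mul_add_one_sub_inv_six_mul_add_five :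
    Tendsto (fun N : ℕ => ∑ n ∈ Finset.range N, ((1 : ℝ) / (6 * n + 1) - 1 / (6 * n + 5)))
      atTop (𝓝 (√3 * π / 6)) := by
  have hg := continuous_one_add_sq_div_one_add_sq_add_pow_four
  have hsplit (N : ℕ) : ∑ n ∈ Finset.range N, ((1 : ℝ) / (6 * n + 1) - 1 / (6 * n + 5)) =
      (∫ x in (0 : ℝ)..1, (1 + x ^ 2) / (1 + x ^ 2 + x ^ 4)) -
        ∫ x in (0 : ℝ)..1, (1 + x ^ 2) / (1 + x ^ 2 + x ^ 4) * x ^ (6 * N) := by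
    rw [sum_range_inv_sub_inv_eq_integral, ← integral_sub (hg.intervalIntegrable 0 1)
      ((hg.intervalIntegrable 0 1).mul_continuousOn (continuous_pow _).continuousOn)]
    simp only [mul_one_sub]
  simp_rw [hsplit, integral_one_add_sq_div_one_add_sq_add_pow_four]
  have hrem := (tendsto_integral_mul_pow_atTop hg.continuousOn).comp
    (tendsto_id.const_mul_atTop' (by norm_num : 0 < 6))
  simpa using tendsto_const_nhds.sub hrem

/- For `m = 5n + j`, `j < 5`, the terms `1/(6m+1) - 1/(6m+5)` are those on the left together
with `-1/(30n+5) + 1/(30n+25)`, and `1/(30n+5) - 1/(30n+25) = (1/(6n+1) - 1/(6n+5))/5`. -/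
lemma thirty_block_eq (n : ℕ) :
    (1 : ℝ) / (30 * n + 1) + 1 / (30 * n + 7) - 1 / (30 * n + 11)
        + 1 / (30 * n + 13) - 1 / (30 * n + 17) + 1 / (30 * n + 19)
        - 1 / (30 * n + 23) - 1 / (30 * n + 29) =
      ∑ j ∈ Finset.range 5, ((1 : ℝ) / (6 * ↑(5 * n + j) + 1) - 1 / (6 * ↑(5 * n + j) + 5))
        + 1 / 5 * ((1 : ℝ) / (6 * n + 1) - 1 / (6 * n + 5)) := by
  simp only [Finset.sum_range_succ, Finset.sum_range_zero]
  push_cast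
  field_simp
  ring

theorem series_sqrt3_pi_div_five :
    Tendsto (fun N => ∑ n ∈ Finset.range N,
        ((1 : ℝ) / (30 * n + 1) + 1 / (30 * n + 7) - 1 / (30 * n + 11)
          + 1 / (30 * n + 13) - 1 / (30 * n + 17) + 1 / (30 * n + 19)
          - 1 / (30 * n + 23) - 1 / (30 * n + 29))) atTop
      (nhds (Real.sqrt 3 * Real.pi / 5)) := by
  have hS := tendsto_sum_range_inv_six_mul_add_one_sub_inv_six_mul_add_five
  have hlim :=
    (hS.comp (tendsto_id.const_mul_atTop' (by norm_num : 0 < 5))).add (hS.const_mul (1 / 5))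
  simp_rw [thirty_block_eq, Finset.sum_add_distrib, ← Finset.mul_sum,
    ← sum_range_mul_eq_sum_sum_range (fun m : ℕ => (1 : ℝ) / (6 * m + 1) - 1 / (6 * m + 5))]
  rwa [show √3 * π / 6 + 1 / 5 * (√3 * π / 6) = √3 * π / 5 by ring] at hlim
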